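/- If $B_j \sim C_1 j^{-\beta}$ with $\beta \in (1/2,1)$ and $C_1 \ne 0$, then as $k \to \infty$, $\sum_{j=0}^{\infty} B_j B_{j+k} \sim C_1^2 \left(\int_0^\infty x^{-\beta}(1+x)^{-\beta}\,dx\right) k^{1-2\beta}$. -/

import Mathlib

open MeasureTheory Filter Set Real Topology

lemma kernel_integrable {β : ℝ} (hβ1 : 1/2 < β) (hβ2 : β < 1) :
    IntegrableOn (fun x : ℝ => x ^ (-β) * (1+x) ^ (-β)) (Ioi 0) := by
  have hmeas : Measurable (fun x : ℝ => x ^ (-β) * (1+x) ^ (-β)) :=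
    (measurable_id.pow_const _).mul ((measurable_const.add measurable_id).pow_const _)
  have h1 : IntegrableOn (fun x : ℝ => x ^ (-β) * (1+x) ^ (-β)) (Ioo 0 1) := by
    have hi : IntegrableOn (fun x : ℝ => x ^ (-β)) (Ioo (0:ℝ) 1) :=
      (intervalIntegral.integrableOn_Ioo_rpow_iff one_pos).2 (by linarith)
    refine hi.mono' hmeas.aestronglyMeasurable ?_
    filter_upwards [ae_restrict_mem measurableSet_Ioo] with x hx
    have hx0 : (0:ℝ) < x := hx.1
    rw [Real.norm_eq_abs, abs_mul, abs_of_nonneg (rpow_nonneg hx0.le _),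
      abs_of_nonneg (rpow_nonneg (by linarith : (0:ℝ) ≤ 1 + x) _)]
    nth_rewrite 2 [show x ^ (-β) = x ^ (-β) * 1 by ring]
    exact mul_le_mul_of_nonneg_left (rpow_le_one_of_one_le_of_nonpos (by linarith) (by linarith))
      (rpow_nonneg hx0.le _)
  have h2 : IntegrableOn (fun x : ℝ => x ^ (-β) * (1+x) ^ (-β)) (Ici 1) := by
    have hi : IntegrableOn (fun x : ℝ => x ^ (-2*β)) (Ioi (1/2:ℝ)) :=
      (integrableOn_Ioi_rpow_iff (by norm_num)).2 (by linarith)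
    refine (hi.mono (by intro x hx; simp at hx ⊢; linarith [hx]) le_rfl).mono'
      hmeas.aestronglyMeasurable ?_
    filter_upwards [ae_restrict_mem measurableSet_Ici] with x hx
    simp only [mem_Ici] at hx
    have hx0 : (0:ℝ) < x := by linarith
    rw [Real.norm_eq_abs, abs_mul, abs_of_nonneg (rpow_nonneg hx0.le _),
      abs_of_nonneg (rpow_nonneg (by linarith : (0:ℝ) ≤ 1 + x) _),
      show -2*β = -β + -β by ring, rpow_add hx0]
    exact mul_le_mul_of_nonneg_left
      (rpow_le_rpow_of_nonpos hx0 (by linarith) (by linarith)) (rpow_nonneg hx0.le _)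
  have : Ioi (0:ℝ) ⊆ Ioo 0 1 ∪ Ici 1 := by
    intro x hx; rcases lt_or_ge x 1 with h | h
    · exact Or.inl ⟨hx, h⟩
    · exact Or.inr h
  exact (h1.union h2).mono this le_rfl

lemma floor_piece_ae (c : ℕ → ℝ) (n : ℕ) :
    (fun x : ℝ => c ⌊x⌋₊) =ᵐ[volume.restrict (Ioc (n:ℝ) (n+1))] fun _ => c n := by
  have hne : ∀ᵐ x : ℝ, x ≠ (n:ℝ)+1 := by
    have : volume ({(n:ℝ)+1} : Set ℝ) = 0 := measure_singleton _
    filter_upwards [compl_mem_ae_iff.2 this] with x hx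
    simpa using hx
  filter_upwards [ae_restrict_mem measurableSet_Ioc, ae_restrict_of_ae hne] with x hx hx'
  have h0 : (0:ℝ) ≤ x := le_trans (Nat.cast_nonneg n) hx.1.le
  have : ⌊x⌋₊ = n := by
    exact (Nat.floor_eq_iff h0).2 ⟨hx.1.le, lt_of_le_of_ne hx.2 hx'⟩
  rw [this]

lemma integral_floor_eq_tsum (c : ℕ → ℝ) (hc : Summable c) :
    IntegrableOn (fun x : ℝ => c ⌊x⌋₊) (Ioi 0) ∧
    ∫ x in Ioi (0:ℝ), c ⌊x⌋₊ = ∑' n, c n := by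
  set s : ℕ → Set ℝ := fun n => Ioc (n:ℝ) (n+1) with hs_def
  have hsm : ∀ n, MeasurableSet (s n) := fun n => measurableSet_Ioc
  have hU : (⋃ n, s n) = Ioi (0:ℝ) := by
    ext x
    simp only [mem_iUnion, hs_def, mem_Ioc, mem_Ioi]
    constructor
    · rintro ⟨n, h1, _⟩; exact lt_of_le_of_lt (Nat.cast_nonneg n) h1
    · intro hx
      refine ⟨⌈x⌉₊ - 1, ?_, ?_⟩
      · have h1 : 1 ≤ ⌈x⌉₊ := Nat.one_le_ceil_iff.2 hx
        have := Nat.ceil_lt_add_one hx.le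
        push_cast [h1]
        linarith
      · have h1 : 1 ≤ ⌈x⌉₊ := Nat.one_le_ceil_iff.2 hx
        have := Nat.le_ceil x
        push_cast [h1]
        linarith
  have hint : ∀ n, IntegrableOn (fun x : ℝ => c ⌊x⌋₊) (s n) := fun n =>
    ((integrableOn_const measure_Ioc_lt_top.ne)).congr (floor_piece_ae c n).symm
  have hval : ∀ n, ∫ x in s n, c ⌊x⌋₊ = c n := fun n => by
    rw [integral_congr_ae (floor_piece_ae c n), setIntegral_const, Real.volume_real_Ioc,
      show (n:ℝ)+1 - n = 1 by ring]
    simp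
  have hnorm : ∀ n, ∫ x in s n, ‖c ⌊x⌋₊‖ = |c n| := fun n => by
    have : (fun x : ℝ => ‖c ⌊x⌋₊‖) =ᵐ[volume.restrict (s n)] fun _ => |c n| := by
      filter_upwards [floor_piece_ae c n] with x hx; rw [hx]; simp
    rw [integral_congr_ae this, setIntegral_const, Real.volume_real_Ioc,
      show (n:ℝ)+1 - n = 1 by ring]
    simp
  have hIU : IntegrableOn (fun x : ℝ => c ⌊x⌋₊) (⋃ n, s n) := by
    refine integrableOn_iUnion_of_summable_integral_norm hint ?_
    exact (hc.abs).congr fun n => (hnorm n).symm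
  have hdisj : Pairwise (Function.onFun Disjoint s) := by
    intro m n hmn
    rcases hmn.lt_or_gt with h | h
    · exact (Set.Iic_disjoint_Ioc (by exact_mod_cast h)).mono Set.Ioc_subset_Iic_self le_rfl
    · exact ((Set.Iic_disjoint_Ioc (by exact_mod_cast h)).mono Set.Ioc_subset_Iic_self le_rfl).symm
  constructor
  · rwa [hU] at hIU
  · rw [← hU, integral_iUnion hsm hdisj hIU]
    exact tsum_congr hval

lemma integral_floor_mul (c : ℕ → ℝ) (hc : Summable c) {k : ℕ} (hk : 1 ≤ k) :
    IntegrableOn (fun x : ℝ => c ⌊(k:ℝ)*x⌋₊) (Ioi 0) ∧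
    ∫ x in Ioi (0:ℝ), c ⌊(k:ℝ)*x⌋₊ = (k:ℝ)⁻¹ * ∑' n, c n := by
  have hk0 : (0:ℝ) < k := by exact_mod_cast hk
  obtain ⟨hInt, hVal⟩ := integral_floor_eq_tsum c hc
  constructor
  · rw [integrableOn_Ioi_comp_mul_left_iff (fun y : ℝ => c ⌊y⌋₊) 0 hk0, mul_zero]
    exact hInt
  · have := MeasureTheory.integral_comp_mul_left_Ioi (fun y : ℝ => c ⌊y⌋₊) 0 hk0
    rw [mul_zero] at this
    rw [this, hVal, smul_eq_mul]

lemma exists_B_bound (B : ℕ → ℝ) (C₁ β : ℝ) (hC₁ : C₁ ≠ 0)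
    (hB : Filter.Tendsto (fun j => B j / (C₁ * (j : ℝ) ^ (-β))) Filter.atTop (nhds 1)) :
    ∃ M : ℝ, 0 < M ∧ ∀ j : ℕ, 1 ≤ j → |B j| ≤ M * (j:ℝ) ^ (-β) := by
  have h2 : ∀ᶠ j in atTop, |B j / (C₁ * (j:ℝ) ^ (-β))| ≤ 2 := by
    filter_upwards [Metric.tendsto_nhds.1 hB 1 one_pos] with j hj
    rw [Real.dist_eq] at hj
    have := abs_sub_abs_le_abs_sub (B j / (C₁ * (j:ℝ) ^ (-β))) 1
    rw [abs_one] at this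
    linarith
  obtain ⟨N, hN⟩ := eventually_atTop.1 h2
  set M : ℝ := 2*|C₁| + 1 + ∑ j ∈ Finset.range (N+1), |B j| * (j:ℝ)^(β) with hM
  have hsum_nonneg : (0:ℝ) ≤ ∑ j ∈ Finset.range (N+1), |B j| * (j:ℝ)^(β) :=
    Finset.sum_nonneg fun j _ => mul_nonneg (abs_nonneg _) (rpow_nonneg (Nat.cast_nonneg j) _)
  refine ⟨M, by positivity, fun j hj => ?_⟩
  have hj0 : (0:ℝ) < (j:ℝ) := by exact_mod_cast hj
  have hjpow : (0:ℝ) < (j:ℝ) ^ (-β) := rpow_pos_of_pos hj0 _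
  rcases le_or_gt N j with h | h
  · have := hN j h
    have hden : C₁ * (j:ℝ) ^ (-β) ≠ 0 ∨ True := Or.inr trivial
    rw [abs_div] at this
    have habs : |B j| ≤ 2 * |C₁ * (j:ℝ)^(-β)| := by
      rcases eq_or_ne (C₁ * (j:ℝ)^(-β)) 0 with h0 | h0
      · exact absurd h0 (mul_ne_zero hC₁ hjpow.ne')
      · rw [div_le_iff₀ (abs_pos.2 h0)] at this; linarith [this]
    calc |B j| ≤ 2 * |C₁ * (j:ℝ)^(-β)| := habs
      _ = 2*|C₁| * (j:ℝ)^(-β) := by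
          rw [abs_mul, abs_of_nonneg hjpow.le]; ring
      _ ≤ M * (j:ℝ)^(-β) := by
          refine mul_le_mul_of_nonneg_right ?_ hjpow.le
          rw [hM]; linarith
  · have hterm : |B j| * (j:ℝ)^(β) ≤ ∑ i ∈ Finset.range (N+1), |B i| * (i:ℝ)^(β) :=
      Finset.single_le_sum (f := fun i => |B i| * (i:ℝ)^β) (fun i _ => mul_nonneg (abs_nonneg _) (rpow_nonneg (Nat.cast_nonneg i) _))
        (Finset.mem_range.2 (Nat.lt_succ_of_lt h))
    have key : |B j| = (|B j| * (j:ℝ)^β) * (j:ℝ)^(-β) := by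
      rw [mul_assoc, ← rpow_add hj0]
      simp
    rw [key]
    refine mul_le_mul_of_nonneg_right ?_ hjpow.le
    rw [hM]
    have : (0:ℝ) ≤ |C₁| := abs_nonneg _
    linarith

lemma summable_prodB (B : ℕ → ℝ) {M β : ℝ} (hβ1 : 1/2 < β) (hM0 : 0 ≤ M)
    (hM : ∀ j : ℕ, 1 ≤ j → |B j| ≤ M * (j:ℝ)^(-β)) (k : ℕ) :
    Summable (fun j => B j * B (j+k)) := by
  refine Summable.of_norm_bounded_eventually_nat (g := fun j => M^2 * (j:ℝ)^(-(2*β))) ?_ ?_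
  · exact (Real.summable_nat_rpow.2 (by linarith)).mul_left _
  · filter_upwards [eventually_ge_atTop 1] with j hj
    have hj0 : (0:ℝ) < (j:ℝ) := by exact_mod_cast hj
    have hjk : (1:ℕ) ≤ j + k := le_add_right hj
    have h1 : |B j| ≤ M * (j:ℝ)^(-β) := hM j hj
    have h2 : |B (j+k)| ≤ M * ((j:ℝ)+(k:ℝ))^(-β) := by
      have := hM (j+k) hjk; rwa [Nat.cast_add] at this
    have h3 : ((j:ℝ)+(k:ℝ))^(-β) ≤ (j:ℝ)^(-β) :=
      rpow_le_rpow_of_nonpos hj0 (le_add_of_nonneg_right (Nat.cast_nonneg k)) (by linarith)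
    calc ‖B j * B (j+k)‖ = |B j| * |B (j+k)| := abs_mul _ _
      _ ≤ (M * (j:ℝ)^(-β)) * (M * (j:ℝ)^(-β)) := by
          refine mul_le_mul h1 (h2.trans ?_) (abs_nonneg _) (by positivity)
          exact mul_le_mul_of_nonneg_left h3 hM0
      _ = M^2 * (j:ℝ)^(-(2*β)) := by
          rw [show -(2*β) = -β + -β by ring, rpow_add hj0]; ring

lemma pointwise_lim (B : ℕ → ℝ) (C₁ β : ℝ) (hC₁ : C₁ ≠ 0)
    (hB : Tendsto (fun j => B j / (C₁ * (j:ℝ)^(-β))) atTop (𝓝 1)) {x : ℝ} (hx : 0 < x) :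
    Tendsto (fun k : ℕ => (k:ℝ)^(2*β) * (B ⌊(k:ℝ)*x⌋₊ * B (⌊(k:ℝ)*x⌋₊ + k)))
      atTop (𝓝 (C₁^2 * (x^(-β) * (1+x)^(-β)))) := by
  have hKcast : Tendsto (fun k : ℕ => (k:ℝ)) atTop atTop := tendsto_natCast_atTop_atTop
  have hmul : Tendsto (fun k : ℕ => (k:ℝ)*x) atTop atTop := hKcast.atTop_mul_const hx
  have hfloor : Tendsto (fun k : ℕ => ⌊(k:ℝ)*x⌋₊) atTop atTop :=
    tendsto_nat_floor_atTop.comp hmul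
  have hfloor2 : Tendsto (fun k : ℕ => ⌊(k:ℝ)*x⌋₊ + k) atTop atTop :=
    hfloor.atTop_add_atTop tendsto_id
  have t1 : Tendsto (fun k : ℕ => B ⌊(k:ℝ)*x⌋₊ / (C₁ * ((⌊(k:ℝ)*x⌋₊ : ℕ):ℝ)^(-β)))
      atTop (𝓝 1) := hB.comp hfloor
  have t2 : Tendsto (fun k : ℕ => B (⌊(k:ℝ)*x⌋₊ + k) / (C₁ * (((⌊(k:ℝ)*x⌋₊ + k : ℕ)):ℝ)^(-β)))
      atTop (𝓝 1) := hB.comp hfloor2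
  have hratio : Tendsto (fun k : ℕ => ((⌊(k:ℝ)*x⌋₊:ℕ):ℝ) / (k:ℝ)) atTop (𝓝 x) := by
    have := (tendsto_nat_floor_mul_div_atTop hx.le).comp hKcast
    simpa [Function.comp_def, mul_comm] using this
  have hratio2 : Tendsto (fun k : ℕ => (((⌊(k:ℝ)*x⌋₊ + k : ℕ)):ℝ) / (k:ℝ)) atTop (𝓝 (1+x)) := by
    have h := hratio.add (tendsto_const_nhds (x := (1:ℝ)))
    rw [add_comm] at h
    refine h.congr' ?_
    filter_upwards [eventually_ge_atTop 1] with k hk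
    have hk0 : ((k:ℕ):ℝ) ≠ 0 := by positivity
    push_cast
    rw [add_div, div_self hk0]
  have t3a : Tendsto (fun k : ℕ => (((⌊(k:ℝ)*x⌋₊:ℕ):ℝ) / (k:ℝ))^(-β)) atTop (𝓝 (x^(-β))) :=
    hratio.rpow_const (Or.inl hx.ne')
  have t3b : Tendsto (fun k : ℕ => ((((⌊(k:ℝ)*x⌋₊ + k : ℕ)):ℝ) / (k:ℝ))^(-β)) atTop
      (𝓝 ((1+x)^(-β))) := hratio2.rpow_const (Or.inl (by positivity))
  have tall : Tendsto (fun k : ℕ =>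
      (B ⌊(k:ℝ)*x⌋₊ / (C₁ * ((⌊(k:ℝ)*x⌋₊ : ℕ):ℝ)^(-β)))
      * (B (⌊(k:ℝ)*x⌋₊ + k) / (C₁ * (((⌊(k:ℝ)*x⌋₊ + k : ℕ)):ℝ)^(-β)))
      * (C₁^2 * (((⌊(k:ℝ)*x⌋₊:ℕ):ℝ) / (k:ℝ))^(-β)
          * ((((⌊(k:ℝ)*x⌋₊ + k : ℕ)):ℝ) / (k:ℝ))^(-β)))
      atTop (𝓝 (1 * 1 * (C₁^2 * x^(-β) * (1+x)^(-β)))) :=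
    (t1.mul t2).mul ((tendsto_const_nhds.mul t3a).mul t3b)
  rw [show (1:ℝ) * 1 * (C₁^2 * x^(-β) * (1+x)^(-β)) = C₁^2 * (x^(-β) * (1+x)^(-β)) by ring] at tall
  refine tall.congr' ?_
  filter_upwards [hfloor.eventually_ge_atTop 1, eventually_ge_atTop 1] with k hn hk
  set n : ℕ := ⌊(k:ℝ)*x⌋₊ with hn_def
  have ha : (0:ℝ) < (n:ℝ) := by exact_mod_cast hn
  have hK : (0:ℝ) < (k:ℝ) := by exact_mod_cast hk
  have h1 : ((n:ℝ))^(-β) ≠ 0 := (rpow_pos_of_pos ha _).ne'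
  have h2 : (((n+k:ℕ)):ℝ)^(-β) ≠ 0 := by
    have : (0:ℝ) < ((n+k:ℕ):ℝ) := by positivity
    exact (rpow_pos_of_pos this _).ne'
  have hdiv1 : (((n:ℕ):ℝ) / (k:ℝ))^(-β) = (n:ℝ)^(-β) * ((k:ℝ)^β) := by
    rw [Real.div_rpow ha.le hK.le, Real.rpow_neg hK.le β, div_eq_mul_inv, inv_inv]
  have hdiv2 : ((((n + k:ℕ)):ℝ) / (k:ℝ))^(-β) = (((n+k:ℕ)):ℝ)^(-β) * ((k:ℝ)^β) := by
    have hnk : (0:ℝ) ≤ ((n+k:ℕ):ℝ) := by positivity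
    rw [Real.div_rpow hnk hK.le, Real.rpow_neg hK.le β, div_eq_mul_inv, inv_inv]
  have hKK : (k:ℝ)^β * (k:ℝ)^β = (k:ℝ)^(2*β) := by
    rw [← rpow_add hK]; ring_nf
  have hcast : ((n+k:ℕ):ℝ) = (n:ℝ)+(k:ℝ) := by push_cast; ring
  rw [hdiv1, hdiv2, hcast]
  field_simp
  have hKK' : (k:ℝ)^β * (k:ℝ)^β = (k:ℝ)^(β*2) := by rw [mul_comm β 2]; exact hKK
  linear_combination (B n * B (n+k)) * hKK'

lemma F_bound (B : ℕ → ℝ) {M β : ℝ} (hβ0 : 0 < β) (hM0 : 0 < M)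
    (hM : ∀ j : ℕ, 1 ≤ j → |B j| ≤ M * (j:ℝ)^(-β)) {k : ℕ} (hk : 1 ≤ k) {x : ℝ} (hx : 0 < x) :
    |(k:ℝ)^(2*β) * (B ⌊(k:ℝ)*x⌋₊ * B (⌊(k:ℝ)*x⌋₊ + k))|
      ≤ ((|B 0| * M + M^2) * 4^β) * (x^(-β)*(1+x)^(-β)) := by
  set K : ℝ := (k:ℝ) with hK_def
  have hK1 : (1:ℝ) ≤ K := by rw [hK_def]; exact_mod_cast hk
  have hK : (0:ℝ) < K := lt_of_lt_of_le one_pos hK1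
  have hxpow : (0:ℝ) < x^(-β) := rpow_pos_of_pos hx _
  have h1xpow : (0:ℝ) < (1+x)^(-β) := rpow_pos_of_pos (by linarith) _
  have hKpow : (0:ℝ) < K^(2*β) := rpow_pos_of_pos hK _
  rcases Nat.eq_zero_or_pos ⌊K*x⌋₊ with h0 | hpos
  · -- floor = 0, so K*x < 1
    have hKx1 : K*x < 1 := by
      by_contra h
      push_neg at h
      have := Nat.floor_eq_zero.1 h0
      linarith
    have hx1 : x < 1 := by nlinarith
    have hBk : |B k| ≤ M * K^(-β) := hM k hk
    rw [h0]
    simp only [zero_add]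
    have step1 : |K^(2*β) * (B 0 * B k)| ≤ K^(2*β) * (|B 0| * (M * K^(-β))) := by
      rw [abs_mul, abs_mul, abs_of_nonneg hKpow.le]
      exact mul_le_mul_of_nonneg_left (mul_le_mul_of_nonneg_left hBk (abs_nonneg _)) hKpow.le
    have e1 : K^(2*β) * K^(-β) = K^β := by rw [← rpow_add hK]; ring_nf
    have step2 : K^(2*β) * (|B 0| * (M * K^(-β))) = |B 0| * M * K^β := by
      rw [show K^(2*β) * (|B 0| * (M * K^(-β))) = |B 0| * M * (K^(2*β) * K^(-β)) by ring, e1]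
    have hKb : K^β ≤ x^(-β) := by
      have hKx : K ≤ x⁻¹ := by
        have h := mul_le_mul_of_nonneg_right hKx1.le (inv_nonneg.2 hx.le)
        rwa [mul_assoc, mul_inv_cancel₀ hx.ne', mul_one, one_mul] at h
      calc K^β ≤ (x⁻¹)^β := rpow_le_rpow hK.le hKx hβ0.le
        _ = x^(-β) := by rw [Real.inv_rpow hx.le, ← Real.rpow_neg hx.le]
    have h2b : (1:ℝ) ≤ 2^β * (1+x)^(-β) := by
      have : (1+x)^β ≤ 2^β := rpow_le_rpow (by linarith) (by linarith) hβ0.le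
      have hinv : (1+x)^(-β) = ((1+x)^β)⁻¹ := rpow_neg (by linarith) _
      have hpβ : (0:ℝ) < (1+x)^β := rpow_pos_of_pos (by linarith) _
      rw [hinv, ← div_eq_mul_inv, le_div_iff₀ hpβ, one_mul]
      exact this
    have h24 : (2:ℝ)^β ≤ 4^β := rpow_le_rpow (by norm_num) (by norm_num) hβ0.le
    calc |K^(2*β) * (B 0 * B k)| ≤ |B 0| * M * K^β := step1.trans_eq step2
      _ ≤ |B 0| * M * x^(-β) := by
          exact mul_le_mul_of_nonneg_left hKb (by positivity)
      _ ≤ |B 0| * M * (2^β * (1+x)^(-β)) * x^(-β) := by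
          have hc : (0:ℝ) ≤ |B 0| * M * x^(-β) := by positivity
          nlinarith [mul_le_mul_of_nonneg_left h2b hc]
      _ ≤ ((|B 0| * M + M^2) * 4^β) * (x^(-β)*(1+x)^(-β)) := by
          have h4 : (0:ℝ) < (4:ℝ)^β := rpow_pos_of_pos (by norm_num) _
          have h2 : (0:ℝ) < (2:ℝ)^β := rpow_pos_of_pos (by norm_num) _
          have hcoef : |B 0| * M * 2^β ≤ (|B 0| * M + M^2) * 4^β := by
            nlinarith [sq_nonneg M, mul_nonneg (abs_nonneg (B 0)) hM0.le]
          have hP : (0:ℝ) ≤ x^(-β)*(1+x)^(-β) := by positivity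
          nlinarith [mul_le_mul_of_nonneg_right hcoef hP]
  · -- floor ≥ 1
    set n : ℕ := ⌊K*x⌋₊ with hn_def
    have hn1 : (1:ℝ) ≤ (n:ℝ) := by exact_mod_cast hpos
    have hnR : (0:ℝ) < (n:ℝ) := by linarith
    have hnk : (0:ℝ) < (n:ℝ) + K := by linarith
    have hB1 : |B n| ≤ M * (n:ℝ)^(-β) := hM n hpos
    have hB2 : |B (n+k)| ≤ M * ((n:ℝ)+K)^(-β) := by
      have := hM (n+k) (le_add_right hpos)
      rwa [Nat.cast_add] at this
    -- key lower bounds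
    have hfl : K*x - 1 < (n:ℝ) := by
      have := Nat.sub_one_lt_floor (K*x)
      exact_mod_cast this
    have hA : K*x/2 ≤ (n:ℝ) := by
      rcases le_or_gt (K*x) 2 with h | h
      · linarith
      · linarith
    have hB : K*(1+x)/2 ≤ (n:ℝ) + K := by linarith
    have hKx2 : (0:ℝ) < K*x/2 := by positivity
    have hK1x2 : (0:ℝ) < K*(1+x)/2 := by positivity
    have hr1 : ((n:ℝ))^(-β) ≤ (K*x/2)^(-β) :=
      rpow_le_rpow_of_nonpos hKx2 hA (by linarith)
    have hr2 : ((n:ℝ)+K)^(-β) ≤ (K*(1+x)/2)^(-β) :=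
      rpow_le_rpow_of_nonpos hK1x2 hB (by linarith)
    have e1 : (K*x/2)^(-β) = K^(-β) * x^(-β) * 2^β := by
      rw [div_rpow (by positivity) (by norm_num), mul_rpow hK.le hx.le,
        rpow_neg (by norm_num : (0:ℝ) ≤ 2), div_eq_mul_inv, inv_inv]
    have e2 : (K*(1+x)/2)^(-β) = K^(-β) * (1+x)^(-β) * 2^β := by
      rw [div_rpow (by positivity) (by norm_num), mul_rpow hK.le (by linarith : (0:ℝ) ≤ 1+x),
        rpow_neg (by norm_num : (0:ℝ) ≤ 2), div_eq_mul_inv, inv_inv]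
    have eK : K^(2*β) * K^(-β) * K^(-β) = 1 := by
      rw [← rpow_add hK, ← rpow_add hK, show 2*β + -β + -β = 0 by ring, rpow_zero]
    have e4 : (2:ℝ)^β * 2^β = 4^β := by
      rw [← mul_rpow (by norm_num) (by norm_num)]
      norm_num
    have chain : |K^(2*β) * (B n * B (n+k))| ≤ K^(2*β) * ((M * (K*x/2)^(-β)) * (M * (K*(1+x)/2)^(-β))) := by
      rw [abs_mul, abs_mul, abs_of_nonneg hKpow.le]
      refine mul_le_mul_of_nonneg_left ?_ hKpow.le
      refine mul_le_mul (hB1.trans ?_) (hB2.trans ?_) (abs_nonneg _) (by positivity)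
      · exact mul_le_mul_of_nonneg_left hr1 hM0.le
      · exact mul_le_mul_of_nonneg_left hr2 hM0.le
    have eq2 : K^(2*β) * ((M * (K*x/2)^(-β)) * (M * (K*(1+x)/2)^(-β)))
        = M^2 * 4^β * (x^(-β) * (1+x)^(-β)) := by
      rw [e1, e2]
      calc K^(2*β) * ((M * (K^(-β) * x^(-β) * 2^β)) * (M * (K^(-β) * (1+x)^(-β) * 2^β)))
          = (K^(2*β) * K^(-β) * K^(-β)) * (2^β*2^β) * (M^2 * (x^(-β) * (1+x)^(-β))) := by ring
        _ = M^2 * 4^β * (x^(-β) * (1+x)^(-β)) := by rw [eK, e4]; ring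
    calc |K^(2*β) * (B n * B (n+k))| ≤ M^2 * 4^β * (x^(-β) * (1+x)^(-β)) := chain.trans_eq eq2
      _ ≤ ((|B 0| * M + M^2) * 4^β) * (x^(-β)*(1+x)^(-β)) := by
          have h4 : (0:ℝ) < (4:ℝ)^β := rpow_pos_of_pos (by norm_num) _
          have hb0 := mul_nonneg (abs_nonneg (B 0)) hM0.le
          exact mul_le_mul_of_nonneg_right (mul_le_mul_of_nonneg_right
            (le_add_of_nonneg_left hb0) h4.le) (mul_nonneg hxpow.le h1xpow.le)

/-- If `B j ∼ C₁ j^{-β}` with `β ∈ (1/2,1)` and `C₁ ≠ 0`, then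
`∑_{j=0}^∞ B_j B_{j+k} ∼ C₁² (∫₀^∞ x^{-β}(1+x)^{-β} dx) k^{1-2β}` as `k → ∞`. -/
theorem autocovariance_asymptotics (B : ℕ → ℝ) (C₁ β : ℝ)
    (hβ : β ∈ Set.Ioo (1/2 : ℝ) 1) (hC₁ : C₁ ≠ 0)
    (hB : Filter.Tendsto (fun j => B j / (C₁ * (j : ℝ) ^ (-β))) Filter.atTop (nhds 1)) :
    Filter.Tendsto
      (fun k => (∑' j, B j * B (j + k))
        / (C₁ ^ 2 * (∫ x in Set.Ioi (0:ℝ), x ^ (-β) * (1 + x) ^ (-β))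
            * (k : ℝ) ^ (1 - 2 * β)))
      Filter.atTop (nhds 1) := by
  obtain ⟨hβ1, hβ2⟩ := hβ
  obtain ⟨M, hM0, hM⟩ := exists_B_bound B C₁ β hC₁ hB
  have hgint : IntegrableOn (fun x : ℝ => x^(-β) * (1+x)^(-β)) (Ioi 0) :=
    kernel_integrable hβ1 hβ2
  set I : ℝ := ∫ x in Ioi (0:ℝ), x^(-β) * (1+x)^(-β) with hI_def
  have hIpos : 0 < I := by
    rw [hI_def]
    rw [setIntegral_pos_iff_support_of_nonneg_ae ?_ hgint]
    · have hsub : Ioi (0:ℝ) ⊆ Function.support (fun x : ℝ => x^(-β) * (1+x)^(-β)) := by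
        intro x hx
        simp only [mem_Ioi] at hx
        have : (0:ℝ) < x^(-β) * (1+x)^(-β) :=
          mul_pos (rpow_pos_of_pos hx _) (rpow_pos_of_pos (by linarith) _)
        exact this.ne'
      rw [Set.inter_eq_right.2 hsub, Real.volume_Ioi]
      norm_num
    · rw [EventuallyLE, ae_restrict_iff' measurableSet_Ioi]
      refine ae_of_all _ fun x hx => ?_
      simp only [mem_Ioi] at hx
      have : (0:ℝ) ≤ x^(-β) * (1+x)^(-β) := by positivity
      exact this
  have hCI : C₁^2 * I ≠ 0 := by positivity
  -- dominated convergence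
  set F : ℕ → ℝ → ℝ := fun k x => (k:ℝ)^(2*β) * (B ⌊(k:ℝ)*x⌋₊ * B (⌊(k:ℝ)*x⌋₊ + k)) with hF_def
  have hDCT : Tendsto (fun k => ∫ x in Ioi (0:ℝ), F k x) atTop
      (𝓝 (∫ x in Ioi (0:ℝ), C₁^2 * (x^(-β) * (1+x)^(-β)))) := by
    refine tendsto_integral_filter_of_dominated_convergence
      (fun x => ((|B 0| * M + M^2) * 4^β) * (x^(-β)*(1+x)^(-β))) ?_ ?_ ?_ ?_
    · refine Eventually.of_forall fun k => ?_
      have : Measurable (F k) := by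
        refine Measurable.const_mul ?_ _
        exact (measurable_from_nat (f := fun n => B n * B (n + k))).comp
          (Nat.measurable_floor.comp (measurable_id.const_mul ((k:ℕ):ℝ)))
      exact this.aestronglyMeasurable
    · filter_upwards [eventually_ge_atTop 1] with k hk
      rw [ae_restrict_iff' measurableSet_Ioi]
      refine ae_of_all _ fun x hx => ?_
      simp only [mem_Ioi] at hx
      rw [Real.norm_eq_abs]
      exact F_bound B (by linarith) hM0 hM hk hx
    · exact (hgint.const_mul _)
    · rw [ae_restrict_iff' measurableSet_Ioi]
      refine ae_of_all _ fun x hx => ?_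
      simp only [mem_Ioi] at hx
      exact pointwise_lim B C₁ β hC₁ hB hx
  rw [integral_const_mul] at hDCT
  -- identify the integral with the sum
  have hid : ∀ᶠ k in atTop, ∫ x in Ioi (0:ℝ), F k x
      = (k:ℝ)^(2*β) * ((k:ℝ)⁻¹ * ∑' j, B j * B (j + k)) := by
    filter_upwards [eventually_ge_atTop 1] with k hk
    have hsum : Summable (fun j => B j * B (j+k)) := summable_prodB B hβ1 hM0.le hM k
    obtain ⟨_, hval⟩ := integral_floor_mul (fun j => B j * B (j+k)) hsum hk
    rw [hF_def]
    simp only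
    rw [integral_const_mul, hval]
  have hT : Tendsto (fun k : ℕ => (k:ℝ)^(2*β) * ((k:ℝ)⁻¹ * ∑' j, B j * B (j + k)))
      atTop (𝓝 (C₁^2 * I)) := hDCT.congr' hid
  have hfinal : ∀ᶠ k : ℕ in atTop,
      ((k:ℝ)^(2*β) * ((k:ℝ)⁻¹ * ∑' j, B j * B (j + k))) / (C₁^2 * I)
      = (∑' j, B j * B (j + k)) / (C₁ ^ 2 * I * (k : ℝ) ^ (1 - 2 * β)) := by
    filter_upwards [eventually_ge_atTop 1] with k hk
    have hK : (0:ℝ) < (k:ℝ) := by exact_mod_cast hk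
    have h1 : (k:ℝ)^(1-2*β) = ((k:ℝ)^(2*β) * (k:ℝ)⁻¹)⁻¹ := by
      rw [show (k:ℝ)⁻¹ = (k:ℝ)^(-1:ℝ) by rw [rpow_neg_one], ← rpow_add hK,
        ← rpow_neg hK.le]
      ring_nf
    rw [h1]
    have h2 : (k:ℝ)^(2*β) * (k:ℝ)⁻¹ ≠ 0 := by
      have : (0:ℝ) < (k:ℝ)^(2*β) := rpow_pos_of_pos hK _
      positivity
    field_simp
  have := (hT.div_const (C₁^2 * I)).congr' hfinal
  rw [div_self hCI] at this
  exact this
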